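/- Suppose G is a marked graph with two unmarked vertices v and w such that v is looped, w is unlooped, and v and w are adjacent to exactly the same vertices outside {v,w}. Then V_G = V_{G − v − w}; that is, the marked-graph Jones polynomial is invariant under this Ω.2 move. -/

import Mathlib

open MvPolynomial

/-- A marked graph: a finite vertex set, an adjacency matrix over GF(2)
(the diagonal entry at `v` is 1 iff `v` carries a loop; for `v ≠ w` the `(v,w)` entry
is 1 iff `v` and `w` are adjacent), a designated set of marked vertices, and a number
of free loops. -/
structure MarkedGraph (V : Type) [Fintype V] [DecidableEq V] where
  adj : Matrix V V (ZMod 2)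
  marked : V → Bool
  freeLoops : ℕ

namespace MarkedGraph

variable {V : Type} [Fintype V] [DecidableEq V]

/-- GF(2)-nullity of a square matrix: the dimension of its kernel. -/
noncomputable def nullity {ι : Type*} [Fintype ι] (M : Matrix ι ι (ZMod 2)) : ℕ :=
  Module.finrank (ZMod 2) (LinearMap.ker M.mulVecLin)

/-- The diagonal matrix `Δ_T` over GF(2) whose diagonal entry at `v` is 1 iff `v ∈ T`. -/
def delta (T : Finset V) : Matrix V V (ZMod 2) :=
  Matrix.diagonal fun v => if v ∈ T then 1 else 0

/-- The vertices kept in the submatrix `𝒜(G)_T`: delete each marked vertex whose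
diagonal entry in `𝒜(G) + Δ_T` is 0. -/
def keep (G : MarkedGraph V) (T : Finset V) : Finset V :=
  Finset.univ.filter fun v => ¬ (G.marked v = true ∧ (G.adj + delta T) v v = 0)

/-- The submatrix `𝒜(G)_T` of `𝒜(G) + Δ_T`. -/
def subMat (G : MarkedGraph V) (T : Finset V) :
    Matrix (G.keep T) (G.keep T) (ZMod 2) :=
  fun i j => (G.adj + delta T) i.1 j.1

/-- The marked-graph bracket polynomial `[G] ∈ ℤ[A,B,d]`, where `A = X 0`, `B = X 1`,
`d = X 2`:  `[G] = d^φ ⬝ Σ_{T ⊆ V(G)} A^(n-|T|) B^(|T|) d^(ν(𝒜(G)_T))`. -/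
noncomputable def bracket (G : MarkedGraph V) : MvPolynomial (Fin 3) ℤ :=
  X 2 ^ G.freeLoops *
    ∑ T : Finset V,
      X 0 ^ (Fintype.card V - T.card) * X 1 ^ T.card * X 2 ^ nullity (G.subMat T)

/-- `x` is a neighbor of `v` (no vertex is a neighbor of itself). -/
def nbr (G : MarkedGraph V) (v x : V) : Prop := x ≠ v ∧ G.adj v x = 1

instance (G : MarkedGraph V) (v x : V) : Decidable (G.nbr v x) :=
  inferInstanceAs (Decidable (x ≠ v ∧ G.adj v x = 1))

/-- Delete the vertices in `s`, together with all incident edges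
(marks and free loops unchanged). -/
def delete (G : MarkedGraph V) (s : Finset V) : MarkedGraph {v : V // v ∉ s} where
  adj := fun i j => G.adj i.1 j.1
  marked := fun i => G.marked i.1
  freeLoops := G.freeLoops

/-- The local complement `G^v`: toggle every entry of the adjacency matrix (diagonal
entries included) whose row and column indices are both neighbors of `v`. -/
def localComp (G : MarkedGraph V) (v : V) : MarkedGraph V :=
  { G with adj := fun x y => if G.nbr v x ∧ G.nbr v y then G.adj x y + 1 else G.adj x y }

/-- `G - {v,v}`: remove the loop at `v` (set the diagonal entry at `v` to 0). -/
def removeLoop (G : MarkedGraph V) (v : V) : MarkedGraph V :=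
  { G with adj := fun x y => if x = v ∧ y = v then 0 else G.adj x y }

/-- `G + I`: toggle all loops. -/
def addI (G : MarkedGraph V) : MarkedGraph V :=
  { G with adj := G.adj + 1 }

/-- `G⁺`: adjoin one free loop. -/
def addFreeLoop (G : MarkedGraph V) : MarkedGraph V :=
  { G with freeLoops := G.freeLoops + 1 }

/-- The condition under which the pivot `G^{vw}` toggles the adjacency between `x`
and `y`: `x` is a neighbor of `v`, `y` is a neighbor of `w`, and either `x` is not a
neighbor of `w` or `y` is not a neighbor of `v`. -/
def pivotCond (G : MarkedGraph V) (v w x y : V) : Prop :=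
  G.nbr v x ∧ G.nbr w y ∧ (¬ G.nbr w x ∨ ¬ G.nbr v y)

instance (G : MarkedGraph V) (v w x y : V) : Decidable (G.pivotCond v w x y) :=
  inferInstanceAs (Decidable (G.nbr v x ∧ G.nbr w y ∧ (¬ G.nbr w x ∨ ¬ G.nbr v y)))

/-- The pivot `G^{vw}`: toggle the adjacency between every pair of distinct vertices
`x, y ∉ {v,w}` such that `x` is a neighbor of `v`, `y` is a neighbor of `w`, and
either `x` is not a neighbor of `w` or `y` is not a neighbor of `v`
(loops are unaffected). -/
def pivot (G : MarkedGraph V) (v w : V) : MarkedGraph V :=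
  { G with adj := fun x y =>
      if x ≠ v ∧ x ≠ w ∧ y ≠ v ∧ y ≠ w ∧ x ≠ y ∧
          (G.pivotCond v w x y ∨ G.pivotCond v w y x)
      then G.adj x y + 1 else G.adj x y }

/-- Interchange the neighbors of `v` and `w` in an adjacency matrix, keeping loops
and the edge between `v` and `w` unchanged. -/
def swapAdjacencies (M : Matrix V V (ZMod 2)) (v w : V) : Matrix V V (ZMod 2) :=
  fun x y =>
    if x = y then M x y
    else if (x = v ∧ y = w) ∨ (x = w ∧ y = v) then M x y
    else M (Equiv.swap v w x) (Equiv.swap v w y)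

/-- The marked pivot `G_c^{vw}`: the pivot `G^{vw}` with the marks on `v` and `w`
toggled and the neighbors of `v` and `w` interchanged (loops, the edge between `v`
and `w`, and free loops unchanged). -/
def markedPivot (G : MarkedGraph V) (v w : V) : MarkedGraph V where
  adj := swapAdjacencies (G.pivot v w).adj v w
  marked := fun u => if u = v ∨ u = w then !(G.marked u) else G.marked u
  freeLoops := G.freeLoops

/-- The disjoint union of two marked graphs: block-diagonal adjacency matrix,
each vertex marked as it was, free loops added. -/
def disjUnion {V₁ V₂ : Type} [Fintype V₁] [DecidableEq V₁] [Fintype V₂] [DecidableEq V₂]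
    (G₁ : MarkedGraph V₁) (G₂ : MarkedGraph V₂) : MarkedGraph (V₁ ⊕ V₂) where
  adj := Matrix.fromBlocks G₁.adj 0 0 G₂.adj
  marked := Sum.elim G₁.marked G₂.marked
  freeLoops := G₁.freeLoops + G₂.freeLoops

/-- Remove the three edges `{u,v}`, `{u,w}`, `{v,w}` (all else unchanged). -/
def removeEdges3 (G : MarkedGraph V) (u v w : V) : MarkedGraph V :=
  { G with adj := fun x y =>
      if (x = u ∧ y = v) ∨ (x = v ∧ y = u) ∨ (x = u ∧ y = w) ∨ (x = w ∧ y = u) ∨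
          (x = v ∧ y = w) ∨ (x = w ∧ y = v)
      then 0 else G.adj x y }

/-- Adjoin one isolated, unmarked vertex with no incident edges; it is looped iff
`loop = true`. -/
def addIsolated (G : MarkedGraph V) (loop : Bool) : MarkedGraph (Option V) where
  adj := fun x y =>
    match x, y with
    | some a, some b => G.adj a b
    | none, none => if loop then 1 else 0
    | _, _ => 0
  marked := fun x => match x with | some a => G.marked a | none => false
  freeLoops := G.freeLoops

/-- The number of vertices of `s` that are adjacent to `x`. -/
def countAdj (G : MarkedGraph V) (x : V) (s : Finset V) : ℕ :=
  (s.filter fun y => G.adj x y = 1).card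

/-- The reduced marked-graph bracket `⟨G⟩ ∈ ℤ[A, A⁻¹]`: substitute `B ↦ A⁻¹` and
`d ↦ -A² - A⁻²` in `[G]`. -/
noncomputable def reducedBracket (G : MarkedGraph V) : LaurentPolynomial ℤ :=
  MvPolynomial.aeval
    ![LaurentPolynomial.T 1, LaurentPolynomial.T (-1),
      -LaurentPolynomial.T 2 - LaurentPolynomial.T (-2)] G.bracket

/-- The number of looped vertices of `G`. -/
def numLoops (G : MarkedGraph V) : ℕ :=
  (Finset.univ.filter fun v => G.adj v v = 1).card

/-- The Jones polynomial `V_G = (-1)^n ⬝ q^(3n-6ℓ) ⬝ ⟨G⟩(q⁻¹)`, as a Laurent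
polynomial in the formal variable `q` (representing `t^(1/4)`); substituting
`A ↦ q⁻¹` in `⟨G⟩` amounts to substituting `A ↦ q⁻¹`, `B ↦ q`, `d ↦ -q² - q⁻²`
in `[G]`. -/
noncomputable def jones (G : MarkedGraph V) : LaurentPolynomial ℤ :=
  (-1) ^ Fintype.card V *
    LaurentPolynomial.T (3 * (Fintype.card V : ℤ) - 6 * (G.numLoops : ℤ)) *
    MvPolynomial.aeval
      ![LaurentPolynomial.T (-1), LaurentPolynomial.T 1,
        -LaurentPolynomial.T 2 - LaurentPolynomial.T (-2)] G.bracket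

end MarkedGraph

/-!
Split the state sum over `T ⊆ V` according to `T ∩ {v, w}` and write `T' = T \ {v, w}`.
Since `v` and `w` are unmarked they are never deleted from `𝒜(G)_T`, and since they have the
same neighbours, `𝒜(G)_T` is, up to reindexing, the matrix `N = 𝒜(G - v - w)_{T'}` bordered by
two copies of one column `c`, with a `2 × 2` corner `!![a, e; e, b]` where `a = 1 + [v ∈ T]`,
`b = [w ∈ T]` and `e = 𝒜(G)_{vw}`. Elementary kernel computations over GF(2) show that the
nullity of this matrix is `ν P` when `a + b = 1`, `ν N` when `a = b ≠ e`, and `ν P + 1` when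
`a = b = e`, where `P` is `N` bordered once by `c` with corner `e`. Collecting the four
summands gives `[G] = A B [G - v - w] + (A² + B² + A B d) R`, and the second term vanishes
under `B = A⁻¹`, `d = -A² - A⁻²`. Finally `n` drops by 2 and `ℓ` by 1, which leaves the
normalising factor `(-1)ⁿ q^(3n - 6ℓ)` unchanged.
-/

open MvPolynomial Matrix

theorem Matrix.rank_submatrix_of_surjective {R m n m₀ n₀ : Type*} [CommSemiring R]
    [StrongRankCondition R] [Fintype n] [Fintype n₀] (A : Matrix m n R) {r : m₀ → m}
    {c : n₀ → n} (hr : r.Surjective) (hc : c.Surjective) :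
    (A.submatrix r c).rank = A.rank := by
  refine le_antisymm (A.rank_submatrix_le r c) ?_
  calc A.rank = ((A.submatrix r c).submatrix (Function.surjInv hr) (Function.surjInv hc)).rank := by
        rw [submatrix_submatrix, (Function.rightInverse_surjInv hr).comp_eq_id,
          (Function.rightInverse_surjInv hc).comp_eq_id, submatrix_id_id]
    _ ≤ (A.submatrix r c).rank := rank_submatrix_le _ _ _

theorem Finset.subtype_insert_of_not {α : Type*} [DecidableEq α] {p : α → Prop}
    [DecidablePred p] (s : Finset α) {a : α} (ha : ¬p a) :
    (insert a s).subtype p = s.subtype p := by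
  ext x
  simp only [Finset.mem_subtype, Finset.mem_insert, or_iff_right_iff_imp]
  rintro rfl
  exact absurd x.2 ha

section FinsetSums

variable {α M : Type*} [Fintype α] [DecidableEq α] [AddCommMonoid M]

theorem Fintype.card_subtype_notMem_add_card (s : Finset α) :
    Fintype.card {x // x ∉ s} + s.card = Fintype.card α := by
  rw [Fintype.card_subtype_compl, Fintype.card_coe]
  exact Nat.sub_add_cancel (Finset.card_le_univ s)

theorem Finset.sum_finset_subtype_eq_sum_powerset_compl (s : Finset α)
    (f : Finset {x // x ∉ s} → M) :
    ∑ T, f T = ∑ U ∈ sᶜ.powerset, f (U.subtype (· ∉ s)) := by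
  refine Finset.sum_nbij' (fun T => T.map (Function.Embedding.subtype _))
    (fun U => U.subtype (· ∉ s)) ?_ ?_ ?_ ?_ ?_
  · intro T _
    simpa [Finset.subset_iff] using fun x hx _ => hx
  · intro U _
    simp
  · intro T _
    ext x
    simp [x.2]
  · intro U hU
    exact Finset.subtype_map_of_mem fun x hx => by simpa using Finset.mem_powerset.1 hU hx
  · intro T _
    congr
    ext x
    simp [x.2]

theorem Finset.sum_finset_eq_sum_powerset_compl_pair {v w : α} (hvw : v ≠ w)
    (f : Finset α → M) :
    ∑ T, f T = ∑ U ∈ ({v, w} : Finset α)ᶜ.powerset,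
      (f U + f (insert w U) + (f (insert v U) + f (insert v (insert w U)))) := by
  have huniv : (Finset.univ : Finset α) = insert v (insert w {v, w}ᶜ) := by
    ext
    simp only [Finset.mem_univ, Finset.mem_insert, Finset.mem_compl, Finset.mem_singleton,
      true_iff]
    tauto
  rw [← Finset.powerset_univ, huniv, Finset.sum_powerset_insert (by simp [hvw]),
    Finset.sum_powerset_insert (by simp), Finset.sum_powerset_insert (by simp)]
  simp only [← Finset.sum_add_distrib]

end FinsetSums

namespace MarkedGraph

section Nullity

variable {ι ι' : Type*} [Fintype ι] [Fintype ι']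

theorem nullity_add_rank (M : Matrix ι ι (ZMod 2)) : nullity M + M.rank = Fintype.card ι := by
  have h := LinearMap.finrank_range_add_finrank_ker M.mulVecLin
  rw [Module.finrank_fintype_fun_eq_card] at h
  rw [nullity, Matrix.rank]
  omega

theorem nullity_submatrix_add_card (M : Matrix ι ι (ZMod 2)) {π : ι' → ι}
    (hπ : π.Surjective) :
    nullity (M.submatrix π π) + Fintype.card ι = nullity M + Fintype.card ι' := by
  have h := nullity_add_rank (M.submatrix π π)
  rw [rank_submatrix_of_surjective M hπ hπ] at h
  have := nullity_add_rank M
  omega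

theorem nullity_submatrix (M : Matrix ι ι (ZMod 2)) (e : ι' ≃ ι) :
    nullity (M.submatrix e e) = nullity M := by
  have h := nullity_submatrix_add_card M e.surjective
  rw [Fintype.card_congr e] at h
  omega

theorem natCard_ker_eq_two_pow_nullity (M : Matrix ι ι (ZMod 2)) :
    Nat.card {x // M *ᵥ x = 0} = 2 ^ nullity M := by
  have h := Module.natCard_eq_pow_finrank (K := ZMod 2) (V := LinearMap.ker M.mulVecLin)
  rw [Nat.card_zmod] at h
  exact h

theorem nullity_eq_of_bijOn {M : Matrix ι ι (ZMod 2)} {M' : Matrix ι' ι' (ZMod 2)}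
    {f : (ι → ZMod 2) → ι' → ZMod 2}
    (hf : Set.BijOn f {x | M *ᵥ x = 0} {x | M' *ᵥ x = 0}) :
    nullity M = nullity M' := by
  have h := Nat.card_congr (hf.equiv f)
  rw [Set.coe_ofPred, Set.coe_ofPred, natCard_ker_eq_two_pow_nullity,
    natCard_ker_eq_two_pow_nullity] at h
  exact Nat.pow_right_injective le_rfl h

end Nullity

variable {ι : Type*} [Fintype ι]

def bordered {κ R : Type*} (N : Matrix ι ι R) (c : ι → R) (D : Matrix κ κ R) :
    Matrix (ι ⊕ κ) (ι ⊕ κ) R :=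
  fromBlocks N (of fun i _ => c i) (of fun _ j => c j) D

section Bordered

variable {R : Type*} [CommRing R] (N : Matrix ι ι R) (c : ι → R)

theorem bordered_mulVec_eq_zero_iff {κ : Type*} [Fintype κ] (D : Matrix κ κ R)
    (x : ι ⊕ κ → R) :
    bordered N c D *ᵥ x = 0 ↔
      (∀ i, (N *ᵥ (x ∘ Sum.inl)) i + c i * ∑ k, x (Sum.inr k) = 0) ∧
        ∀ k, c ⬝ᵥ (x ∘ Sum.inl) + (D *ᵥ (x ∘ Sum.inr)) k = 0 := by
  simp only [bordered, fromBlocks_mulVec, funext_iff, Sum.forall, Sum.elim_inl, Sum.elim_inr,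
    Pi.add_apply, Pi.zero_apply, mulVec, dotProduct, of_apply, Function.comp_apply,
    Finset.mul_sum]

theorem bordered_one_mulVec_eq_zero_iff (e : R) (x : ι ⊕ Fin 1 → R) :
    bordered N c !![e] *ᵥ x = 0 ↔
      (∀ i, (N *ᵥ (x ∘ Sum.inl)) i + c i * x (Sum.inr 0) = 0) ∧
        c ⬝ᵥ (x ∘ Sum.inl) + e * x (Sum.inr 0) = 0 := by
  simp [bordered_mulVec_eq_zero_iff, vecHead]

theorem bordered_two_mulVec_eq_zero_iff (a b e : R) (x : ι ⊕ Fin 2 → R) :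
    bordered N c !![a, e; e, b] *ᵥ x = 0 ↔
      (∀ i, (N *ᵥ (x ∘ Sum.inl)) i + c i * (x (Sum.inr 0) + x (Sum.inr 1)) = 0) ∧
        c ⬝ᵥ (x ∘ Sum.inl) + a * x (Sum.inr 0) + e * x (Sum.inr 1) = 0 ∧
        c ⬝ᵥ (x ∘ Sum.inl) + e * x (Sum.inr 0) + b * x (Sum.inr 1) = 0 := by
  simp [bordered_mulVec_eq_zero_iff, Fin.forall_fin_two, Fin.sum_univ_two, vecHead, vecTail,
    add_assoc]

end Bordered

section BorderedNullity

variable (N : Matrix ι ι (ZMod 2)) (c : ι → ZMod 2)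

theorem nullity_bordered_add_one_diag (e : ZMod 2) :
    nullity (bordered N c !![e + 1, e; e, e + 1]) = nullity N := by
  refine (nullity_eq_of_bijOn (f := fun y => Sum.elim y fun _ => c ⬝ᵥ y)
    (Set.InvOn.bijOn (f' := fun x => x ∘ Sum.inl) ⟨fun y _ => rfl, fun x hx => ?_⟩
      (fun y hy => ?_) (fun x hx => ?_))).symm
  · obtain ⟨-, h₀, h₁⟩ := (bordered_two_mulVec_eq_zero_iff ..).1 hx
    ext (i | k)
    · rfl
    · fin_cases k <;> simp <;> grind
  · rw [Set.mem_ofPred, bordered_two_mulVec_eq_zero_iff]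
    simp only [Set.mem_ofPred, funext_iff, Pi.zero_apply] at hy
    refine ⟨fun i => ?_, ?_, ?_⟩ <;> simp <;> grind
  · obtain ⟨hN, h₀, h₁⟩ := (bordered_two_mulVec_eq_zero_iff ..).1 hx
    ext i
    have := hN i
    simp only [Pi.zero_apply]
    grind

theorem nullity_bordered_const (e : ZMod 2) :
    nullity (bordered N c !![e, e; e, e]) = nullity (bordered N c !![e]) + 1 := by
  have hsub : bordered N c !![e, e; e, e] =
      (bordered N c !![e]).submatrix (Sum.map id 0) (Sum.map id 0) := by
    ext (i | k) (j | l) <;> try fin_cases k <;> try fin_cases l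
    all_goals simp [bordered]
  have h := nullity_submatrix_add_card (bordered N c !![e])
    (Function.surjective_id.sumMap fun k => ⟨0, Subsingleton.elim _ k⟩ :
      (Sum.map id 0 : ι ⊕ Fin 2 → ι ⊕ Fin 1).Surjective)
  simp only [Fintype.card_sum, Fintype.card_fin] at h
  rw [hsub]
  omega

theorem nullity_bordered_of_add_eq_one {a b : ZMod 2} (hab : a + b = 1) (e : ZMod 2) :
    nullity (bordered N c !![a, e; e, b]) = nullity (bordered N c !![e]) := by
  obtain rfl : b = a + 1 := by grind
  -- the last coordinate `u` of a kernel vector of the `1 × 1`-cornered matrix goes to the border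
  -- coordinate whose diagonal entry is `e`, the other one becomes `0`
  refine (nullity_eq_of_bijOn
    (f := fun x => Sum.elim (x ∘ Sum.inl) ![(a + e + 1) * x (Sum.inr 0), (a + e) * x (Sum.inr 0)])
    (Set.InvOn.bijOn
      (f' := fun x => Sum.elim (x ∘ Sum.inl) fun _ => x (Sum.inr 0) + x (Sum.inr 1))
      ⟨fun x _ => ?_, fun x hx => ?_⟩ (fun x hx => ?_) (fun x hx => ?_))).symm
  · ext (i | k)
    · rfl
    · fin_cases k
      simp
      grind
  · obtain ⟨-, h₀, h₁⟩ := (bordered_two_mulVec_eq_zero_iff ..).1 hx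
    ext (i | k)
    · rfl
    · fin_cases a <;> fin_cases e <;> fin_cases k <;> simp <;> grind
  · obtain ⟨hN, h₀⟩ := (bordered_one_mulVec_eq_zero_iff ..).1 hx
    rw [Set.mem_ofPred, bordered_two_mulVec_eq_zero_iff]
    refine ⟨fun i => ?_, ?_, ?_⟩ <;> simp <;> fin_cases a <;> fin_cases e <;> grind
  · obtain ⟨hN, h₀, h₁⟩ := (bordered_two_mulVec_eq_zero_iff ..).1 hx
    rw [Set.mem_ofPred, bordered_one_mulVec_eq_zero_iff]
    refine ⟨fun i => ?_, ?_⟩ <;> simp <;> fin_cases a <;> fin_cases e <;> grind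

theorem pow_nullity_bordered_diag_add {S : Type*} [CommRing S] (δ : S) (e : ZMod 2) :
    δ ^ nullity (bordered N c !![1, e; e, 1]) + δ ^ nullity (bordered N c !![0, e; e, 0]) =
      δ ^ nullity N + δ ^ (nullity (bordered N c !![e]) + 1) := by
  obtain rfl | rfl : e = 0 ∨ e = 1 := by revert e; decide
  · have h := nullity_bordered_add_one_diag N c 0
    rw [zero_add] at h
    rw [h, nullity_bordered_const]
  · have h := nullity_bordered_add_one_diag N c 1
    rw [show (1 + 1 : ZMod 2) = 0 from rfl] at h
    rw [h, nullity_bordered_const, add_comm]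

end BorderedNullity

variable {V : Type} [DecidableEq V]

theorem delta_apply_of_ne (T : Finset V) {x y : V} (hxy : x ≠ y) : delta T x y = 0 :=
  diagonal_apply_ne _ hxy

variable [Fintype V] (G : MarkedGraph V)

theorem delete_adj_add_delta (s T : Finset V) (i j : {x // x ∉ s}) :
    ((G.delete s).adj + delta (T.subtype (· ∉ s))) i j = (G.adj + delta T) i.1 j.1 := by
  rw [Matrix.add_apply, Matrix.add_apply]
  simp [delete, delta, diagonal_apply, Subtype.ext_iff]

theorem mem_keep_delete_iff (s T : Finset V) (i : {x // x ∉ s}) :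
    i ∈ (G.delete s).keep (T.subtype (· ∉ s)) ↔ i.1 ∈ G.keep T := by
  simp only [keep, Finset.mem_filter, Finset.mem_univ, true_and, delete_adj_add_delta]
  rfl

theorem mem_keep_of_marked_eq_false {x : V} (hx : G.marked x = false) (T : Finset V) :
    x ∈ G.keep T := by
  simp [keep, hx]

noncomputable def keepEquiv {v w : V} (hvw : v ≠ w) (hmv : G.marked v = false)
    (hmw : G.marked w = false) (T : Finset V) :
    (G.delete {v, w}).keep (T.subtype (· ∉ ({v, w} : Finset V))) ⊕ Fin 2 ≃ G.keep T :=
  Equiv.ofBijective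
    (Sum.elim (fun i => ⟨i.1.1, (G.mem_keep_delete_iff _ _ _).1 i.2⟩)
      fun k => ⟨![v, w] k,
        G.mem_keep_of_marked_eq_false (by fin_cases k <;> assumption) _⟩) <| by
    refine ⟨Function.Injective.sumElim ?_ ?_ ?_, ?_⟩
    · intro i j h
      have := congrArg Subtype.val h
      exact Subtype.ext (Subtype.ext this)
    · intro k l h
      fin_cases k <;> fin_cases l <;> simp_all [hvw.symm]
    · intro i k h
      have := i.1.2
      fin_cases k <;> simp_all [Subtype.ext_iff]
    · intro x
      by_cases hv : x.1 = v
      · exact ⟨Sum.inr 0, Subtype.ext hv.symm⟩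
      by_cases hw : x.1 = w
      · exact ⟨Sum.inr 1, Subtype.ext hw.symm⟩
      exact ⟨Sum.inl ⟨⟨x.1, by simp [hv, hw]⟩, (G.mem_keep_delete_iff _ _ _).2 x.2⟩,
        rfl⟩

section Pair

variable {v w : V} (hvw : v ≠ w) (hmv : G.marked v = false) (hmw : G.marked w = false)

@[simp] theorem keepEquiv_inl (T : Finset V) (i) :
    (G.keepEquiv hvw hmv hmw T (Sum.inl i) : V) = i.1.1 := rfl

@[simp] theorem keepEquiv_inr (T : Finset V) (k : Fin 2) :
    (G.keepEquiv hvw hmv hmw T (Sum.inr k) : V) = ![v, w] k := rfl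

theorem subMat_submatrix_keepEquiv (hsym : G.adj.IsSymm)
    (hsame : ∀ x, x ≠ v → x ≠ w → G.adj v x = G.adj w x) (T : Finset V) :
    (G.subMat T).submatrix (G.keepEquiv hvw hmv hmw T) (G.keepEquiv hvw hmv hmw T) =
      bordered ((G.delete {v, w}).subMat (T.subtype (· ∉ ({v, w} : Finset V))))
        (fun i => G.adj v i.1.1)
        !![(G.adj + delta T) v v, G.adj v w; G.adj v w, (G.adj + delta T) w w] := by
  have hc : ∀ x, x ∉ ({v, w} : Finset V) →
      G.adj x v = G.adj v x ∧ G.adj x w = G.adj v x ∧ x ≠ v ∧ x ≠ w := fun x hx => by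
    simp only [Finset.mem_insert, Finset.mem_singleton, not_or] at hx
    exact ⟨hsym.apply v x, (hsym.apply w x).trans (hsame x hx.1 hx.2).symm, hx⟩
  ext (i | k) (j | l)
  · exact (G.delete_adj_add_delta _ _ _ _).symm
  · obtain ⟨h₀, h₁, hv, hw⟩ := hc _ i.1.2
    fin_cases l <;> simp [subMat, bordered, delta_apply_of_ne, hv, hw, h₀, h₁]
  · obtain ⟨h₀, h₁, hv, hw⟩ := hc _ j.1.2
    fin_cases k <;> simp [subMat, bordered, delta_apply_of_ne, hv.symm, hw.symm, hsame _ hv hw]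
  · fin_cases k <;> fin_cases l <;>
      simp [subMat, bordered, delta_apply_of_ne, hvw, hvw.symm, hsym.apply v w]

end Pair

theorem nullity_subMat_eq_bordered {v w : V} (hvw : v ≠ w) (hmv : G.marked v = false)
    (hmw : G.marked w = false) (hsym : G.adj.IsSymm)
    (hsame : ∀ x, x ≠ v → x ≠ w → G.adj v x = G.adj w x) (T : Finset V) :
    nullity (G.subMat T) =
      nullity (bordered ((G.delete {v, w}).subMat (T.subtype (· ∉ ({v, w} : Finset V))))
        (fun i => G.adj v i.1.1)
        !![(G.adj + delta T) v v, G.adj v w; G.adj v w, (G.adj + delta T) w w]) := by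
  rw [← G.subMat_submatrix_keepEquiv hvw hmv hmw hsym hsame, nullity_submatrix]

noncomputable def bracketTerm (T : Finset V) : MvPolynomial (Fin 3) ℤ :=
  X 0 ^ (Fintype.card V - T.card) * X 1 ^ T.card * X 2 ^ nullity (G.subMat T)

theorem bracket_eq_sum_bracketTerm : G.bracket = X 2 ^ G.freeLoops * ∑ T, G.bracketTerm T := rfl

theorem bracketTerm_insert_pair {v w : V} (hvw : v ≠ w) (hmv : G.marked v = false)
    (hmw : G.marked w = false) (hv : G.adj v v = 1) (hw : G.adj w w = 0) (hsym : G.adj.IsSymm)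
    (hsame : ∀ x, x ≠ v → x ≠ w → G.adj v x = G.adj w x) {U : Finset V}
    (hU : U ∈ ({v, w} : Finset V)ᶜ.powerset) :
    G.bracketTerm U + G.bracketTerm (insert w U) +
        (G.bracketTerm (insert v U) + G.bracketTerm (insert v (insert w U))) =
      X 0 * X 1 * (G.delete {v, w}).bracketTerm (U.subtype (· ∉ ({v, w} : Finset V))) +
        (X 0 ^ 2 + X 1 ^ 2 + X 0 * X 1 * X 2) *
          (X 0 ^ (Fintype.card {x // x ∉ ({v, w} : Finset V)} - U.card) * X 1 ^ U.card *
            X 2 ^ nullity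
              (bordered ((G.delete {v, w}).subMat (U.subtype (· ∉ ({v, w} : Finset V))))
                (fun i => G.adj v i.1.1) !![G.adj v w])) := by
  have hvU : v ∉ U := fun h => by simpa using Finset.mem_powerset.1 hU h
  have hwU : w ∉ U := fun h => by simpa using Finset.mem_powerset.1 hU h
  have hsub (T : Finset V) :
      (insert v T).subtype (· ∉ ({v, w} : Finset V)) = T.subtype (· ∉ ({v, w} : Finset V)) ∧
      (insert w T).subtype (· ∉ ({v, w} : Finset V)) = T.subtype (· ∉ ({v, w} : Finset V)) :=
    ⟨T.subtype_insert_of_not (by simp), T.subtype_insert_of_not (by simp)⟩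
  have hcard : (U.subtype (· ∉ ({v, w} : Finset V))).card = U.card := by
    rw [Finset.card_subtype, Finset.filter_true_of_mem fun x hx =>
      Finset.mem_compl.1 (Finset.mem_powerset.1 hU hx)]
  have hN := G.nullity_subMat_eq_bordered hvw hmv hmw hsym hsame
  set N := (G.delete {v, w}).subMat (U.subtype (· ∉ ({v, w} : Finset V)))
  set c : _ → ZMod 2 := fun i : (G.delete {v, w}).keep (U.subtype (· ∉ ({v, w} : Finset V))) =>
    G.adj v i.1.1
  have h₀ : nullity (G.subMat U) = nullity (bordered N c !![G.adj v w]) := by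
    rw [hN]
    exact nullity_bordered_of_add_eq_one N c (by simp [delta, hv, hw, hvU, hwU]) _
  have h₃ :
      nullity (G.subMat (insert v (insert w U))) = nullity (bordered N c !![G.adj v w]) := by
    rw [hN, (hsub _).1, (hsub _).2]
    exact nullity_bordered_of_add_eq_one N c (by simp [delta, hv, hw, hvU, hwU, hvw]; rfl) _
  have h₁₂ : X 2 ^ nullity (G.subMat (insert w U)) + X 2 ^ nullity (G.subMat (insert v U)) =
      (X 2 ^ nullity N + X 2 ^ (nullity (bordered N c !![G.adj v w]) + 1) :
        MvPolynomial (Fin 3) ℤ) := by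
    have h₁ : (G.adj + delta (insert w U)) v v = 1 ∧ (G.adj + delta (insert w U)) w w = 1 := by
      simp [delta, hv, hw, hvU, hvw]
    have h₂ : (G.adj + delta (insert v U)) v v = 0 ∧ (G.adj + delta (insert v U)) w w = 0 := by
      simp [delta, hv, hw, hwU, hvw.symm]
      rfl
    rw [hN, hN, (hsub _).1, (hsub _).2, h₁.1, h₁.2, h₂.1, h₂.2]
    exact pow_nullity_bordered_diag_add N c _ _
  obtain ⟨k, hk⟩ : ∃ k, Fintype.card {x // x ∉ ({v, w} : Finset V)} = U.card + k :=
    ⟨_, (Nat.add_sub_of_le (hcard ▸ Finset.card_le_univ _)).symm⟩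
  have hn := Fintype.card_subtype_notMem_add_card ({v, w} : Finset V)
  rw [Finset.card_pair hvw] at hn
  simp only [bracketTerm, h₀, h₃, hcard, Finset.card_insert_of_notMem hvU,
    Finset.card_insert_of_notMem hwU,
    Finset.card_insert_of_notMem (by simp [hvw, hvU] : v ∉ insert w U)]
  rw [hk, show Fintype.card V - U.card = k + 2 by omega,
    show Fintype.card V - (U.card + 1) = k + 1 by omega,
    show Fintype.card V - (U.card + 1 + 1) = k by omega, show U.card + k - U.card = k by omega]
  linear_combination (X 0 ^ (k + 1) * X 1 ^ (U.card + 1)) * h₁₂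

theorem bracket_omega2 {v w : V} (hvw : v ≠ w) (hmv : G.marked v = false)
    (hmw : G.marked w = false) (hv : G.adj v v = 1) (hw : G.adj w w = 0) (hsym : G.adj.IsSymm)
    (hsame : ∀ x, x ≠ v → x ≠ w → G.adj v x = G.adj w x) :
    ∃ R, G.bracket =
      X 0 * X 1 * (G.delete {v, w}).bracket + (X 0 ^ 2 + X 1 ^ 2 + X 0 * X 1 * X 2) * R := by
  rw [bracket_eq_sum_bracketTerm, bracket_eq_sum_bracketTerm,
    Finset.sum_finset_eq_sum_powerset_compl_pair hvw,
    Finset.sum_finset_subtype_eq_sum_powerset_compl,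
    Finset.sum_congr rfl fun U hU => G.bracketTerm_insert_pair hvw hmv hmw hv hw hsym hsame hU]
  simp only [Finset.sum_add_distrib, ← Finset.mul_sum, mul_add]
  rw [mul_left_comm (X 2 ^ _) (X 0 * X 1)]
  exact ⟨_, congrArg _ (mul_left_comm _ _ _)⟩

theorem aeval_bracket_omega2 {v w : V} (hvw : v ≠ w) (hmv : G.marked v = false)
    (hmw : G.marked w = false) (hv : G.adj v v = 1) (hw : G.adj w w = 0) (hsym : G.adj.IsSymm)
    (hsame : ∀ x, x ≠ v → x ≠ w → G.adj v x = G.adj w x) {S : Type*} [CommRing S]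
    [Algebra ℤ S] {α β δ : S} (hαβ : α * β = 1) (hδ : δ = -α ^ 2 - β ^ 2) :
    aeval ![α, β, δ] G.bracket = aeval ![α, β, δ] (G.delete {v, w}).bracket := by
  obtain ⟨R, hR⟩ := G.bracket_omega2 hvw hmv hmw hv hw hsym hsame
  have hK :
      aeval ![α, β, δ] (X 0 ^ 2 + X 1 ^ 2 + X 0 * X 1 * X 2 : MvPolynomial (Fin 3) ℤ) = 0 := by
    simp only [map_add, map_mul, map_pow, aeval_X]
    simp [hαβ, hδ]
  rw [hR, map_add, map_mul _ _ R, hK, zero_mul, add_zero]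
  simp [hαβ]

theorem numLoops_eq_numLoops_delete_add_one {v w : V} (hvw : v ≠ w) (hv : G.adj v v = 1)
    (hw : G.adj w w = 0) :
    G.numLoops = (G.delete {v, w}).numLoops + 1 := by
  rw [numLoops, numLoops, Finset.card_filter, Finset.card_filter,
    ← Finset.sum_compl_add_sum {v, w}, Finset.sum_pair hvw, hv, hw,
    Finset.sum_subtype (p := (· ∉ ({v, w} : Finset V))) (F := inferInstance) _ (by simp)]
  congr!

end MarkedGraph

/-- The Jones polynomial is invariant under the Ω.2 move: if `v` and
`w` are unmarked vertices, `v` looped, `w` unlooped, adjacent to exactly the same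
vertices outside `{v,w}`, then `V_G = V_{G - v - w}`. -/
theorem jones_omega2 {V : Type} [Fintype V] [DecidableEq V]
    (G : MarkedGraph V) (hsym : G.adj.IsSymm) (v w : V) (hvw : v ≠ w)
    (hmv : G.marked v = false) (hmw : G.marked w = false)
    (hv : G.adj v v = 1) (hw : G.adj w w = 0)
    (hsame : ∀ x, x ≠ v → x ≠ w → G.adj v x = G.adj w x) :
    G.jones = (G.delete {v, w}).jones := by
  have hcard := Fintype.card_subtype_notMem_add_card ({v, w} : Finset V)
  rw [Finset.card_pair hvw] at hcard
  open LaurentPolynomial in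
  rw [MarkedGraph.jones, MarkedGraph.jones,
    G.aeval_bracket_omega2 hvw hmv hmw hv hw hsym hsame (by rw [← T_add]; rfl)
      (by simp only [T_pow]; norm_num; ring),
    ← hcard, G.numLoops_eq_numLoops_delete_add_one hvw hv hw, pow_add, neg_one_sq, mul_one]
  congr 3
  push_cast
  ring
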